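/- arXiv:1803.05559 — 12 statements merged into one kernel-verified Lean document; each statement's English description precedes it below -/
import Mathlib

section
/- For every natural number m ≥ 1, one has 2·∑_{s=1}^{m} s·C(2m+1, m−s) = (2m+1)·C(2m, m) − 4^m, where C(a,b) denotes the binomial coefficient. (Equivalently, the number of critical points of the Morse function μ on X_{2m+1} equals (1/2)(−4^m + (2m+1)!/(m!)²).) -/
/-!
Substituting `k = m - s` turns the sum into `∑_{k<m} 2(m-k) C(2m+1,k)`. Since
`(n - 2k) C(n,k) = (k+1) C(n,k+1) - k C(n,k)` telescopes, `∑_{k<m} (2m+1-2k) C(2m+1,k) = m C(2m+1,m)`,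
and the remaining `∑_{k<m} C(2m+1,k)` is half of `2^(2m+1)` minus the middle term `C(2m+1,m)`.
Finally `(m+1) C(2m+1,m) = (2m+1) C(2m,m)`.
-/

open Finset

theorem Finset.sum_Icc_one_sub_eq_sum_range {M : Type*} [AddCommMonoid M] (f : ℕ → ℕ → M)
    (m : ℕ) : ∑ s ∈ Icc 1 m, f s (m - s) = ∑ k ∈ range m, f (m - k) k :=
  sum_nbij' (m - ·) (m - ·)
    (fun s hs ↦ by rw [mem_Icc] at hs; rw [mem_range]; omega)
    (fun k hk ↦ by rw [mem_range] at hk; rw [mem_Icc]; omega)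
    (fun s hs ↦ by rw [mem_Icc] at hs; omega)
    (fun k hk ↦ by rw [mem_range] at hk; omega)
    (fun s hs ↦ by rw [mem_Icc] at hs; rw [Nat.sub_sub_self hs.2])

namespace Nat

theorem sub_two_mul_mul_choose (n k : ℕ) :
    ((n : ℤ) - 2 * k) * n.choose k = (k + 1) * n.choose (k + 1) - k * n.choose k := by
  rcases le_or_gt k n with hkn | hnk
  · have h := choose_succ_right_eq n k
    zify [hkn] at h
    linear_combination -h
  · simp [choose_eq_zero_of_lt hnk, choose_eq_zero_of_lt (hnk.trans (lt_add_one k))]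

theorem sum_range_sub_two_mul_mul_choose (n j : ℕ) :
    ∑ k ∈ range j, ((n : ℤ) - 2 * k) * n.choose k = j * n.choose j := by
  simp_rw [sub_two_mul_mul_choose]
  simpa using sum_range_sub (fun k : ℕ ↦ (k : ℤ) * n.choose k) j

theorem sum_range_choose_lt_halfway (m : ℕ) :
    ∑ k ∈ range m, ((2 * m + 1).choose k : ℤ) = 4 ^ m - (2 * m + 1).choose m := by
  have h := sum_range_choose_halfway m
  rw [sum_range_succ] at h
  zify at h
  linear_combination h

theorem succ_mul_choose_two_mul_succ (m : ℕ) :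
    ((m : ℤ) + 1) * (2 * m + 1).choose m = (2 * m + 1) * (2 * m).choose m := by
  have h := add_one_mul_choose_eq (2 * m) m
  rw [choose_symm_half] at h
  zify at h
  linear_combination -h

end Nat

theorem stmt_0_general (m : ℕ) :
    (2 : ℤ) * ∑ s ∈ Finset.Icc 1 m, (s : ℤ) * ((2 * m + 1).choose (m - s)) =
      (2 * m + 1) * ((2 * m).choose m) - 4 ^ m := by
  rw [sum_Icc_one_sub_eq_sum_range (fun s k ↦ (s : ℤ) * (2 * m + 1).choose k)]
  have h_split : (2 : ℤ) * ∑ k ∈ range m, ((m - k : ℕ) : ℤ) * (2 * m + 1).choose k =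
      ∑ k ∈ range m, (((2 * m + 1 : ℕ) : ℤ) - 2 * k) * (2 * m + 1).choose k -
        ∑ k ∈ range m, ((2 * m + 1).choose k : ℤ) := by
    rw [mul_sum, ← sum_sub_distrib]
    refine sum_congr rfl fun k hk ↦ ?_
    rw [Nat.cast_sub (mem_range.mp hk).le]
    push_cast
    ring
  rw [h_split, Nat.sum_range_sub_two_mul_mul_choose, Nat.sum_range_choose_lt_halfway,
    ← Nat.succ_mul_choose_two_mul_succ]
  ring

/-- Proposition C(i): the number of critical points of the Morse function μ on X_{2m+1}:
    2·∑_{s=1}^{m} s·C(2m+1, m−s) = (2m+1)·C(2m, m) − 4^m. -/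
theorem stmt_0 (m : ℕ) (hm : 1 ≤ m) :
    (2 : ℤ) * ∑ s ∈ Finset.Icc 1 m, (s : ℤ) * ((2 * m + 1).choose (m - s)) =
      (2 * m + 1) * ((2 * m).choose m) - 4 ^ m :=
  stmt_0_general m
end

section
/- For every odd natural number n = 2m+1 with m ≥ 1, the finite set of rational numbers S_n = {β/α : (α, β) ∈ Γ_n} has cardinality (1/2)·∑_{s=1}^{m} φ(2s+1), where φ is Euler's totient function. -/
/-!
Reducing `β / α` by `gcd β α`, which is odd, keeps the numerator even and the denominator odd,
so `S_n` is the disjoint union, over odd `d ∈ [3, n]`, of the fractions `a / d` in lowest terms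
with `0 < a < d` and `a` even. For odd `d` the reflection `a ↦ d - a` permutes the `φ d`
residues prime to `d` and swaps their parity, so exactly half of them are even.
-/

open Finset

namespace Nat

lemma pos_of_coprime_of_one_lt {d a : ℕ} (h : d.Coprime a) (hd : 1 < d) : 0 < a :=
  Nat.pos_of_ne_zero fun ha => by rw [ha, coprime_zero_right] at h; omega

lemma card_filter_coprime_even_eq_card_filter_coprime_odd {d : ℕ} (hd : Odd d) (hd1 : 1 < d) :
    #{a ∈ range d | d.Coprime a ∧ Even a} = #{a ∈ range d | d.Coprime a ∧ Odd a} := by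
  rw [Nat.odd_iff] at hd
  refine card_nbij' (d - ·) (d - ·) ?_ ?_ ?_ ?_ <;> intro a ha <;>
    simp only [coe_filter, mem_range, Set.mem_ofPred_eq, Nat.even_iff, Nat.odd_iff] at ha ⊢ <;>
    have := pos_of_coprime_of_one_lt ha.2.1 hd1
  · exact ⟨by omega, (coprime_self_sub_right ha.1.le).mpr ha.2.1, by omega⟩
  · exact ⟨by omega, (coprime_self_sub_right ha.1.le).mpr ha.2.1, by omega⟩
  · omega
  · omega

lemma two_mul_card_filter_coprime_even {d : ℕ} (hd : Odd d) (hd1 : 1 < d) :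
    2 * #{a ∈ range d | d.Coprime a ∧ Even a} = φ d := by
  rw [two_mul]
  nth_rw 2 [card_filter_coprime_even_eq_card_filter_coprime_odd hd hd1]
  rw [totient, ← card_filter_add_card_filter_not (s := {a ∈ range d | d.Coprime a}) (p := Even),
    filter_filter, filter_filter]
  simp only [Nat.not_even_iff_odd]

end Nat

lemma Rat.natCast_div_inj_of_coprime {a b c d : ℕ} (hb : 0 < b) (hd : 0 < d)
    (hab : b.Coprime a) (hcd : d.Coprime c) (h : (a : ℚ) / b = c / d) : a = c ∧ b = d := by
  have := Rat.div_int_inj (a := a) (b := b) (c := c) (d := d) (by exact_mod_cast hb)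
    (by exact_mod_cast hd) (by simpa using hab.symm) (by simpa using hcd.symm)
    (by simpa only [Int.cast_natCast] using h)
  exact_mod_cast this

def reducedEvenFractions (d : ℕ) : Finset ℚ :=
  {a ∈ range d | d.Coprime a ∧ Even a}.image fun a : ℕ => (a : ℚ) / d

lemma card_reducedEvenFractions {d : ℕ} (hd : 0 < d) :
    #(reducedEvenFractions d) = #{a ∈ range d | d.Coprime a ∧ Even a} :=
  card_image_of_injOn fun _ ha _ hc h =>
    (Rat.natCast_div_inj_of_coprime hd hd (mem_filter.mp ha).2.1 (mem_filter.mp hc).2.1 h).1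

lemma disjoint_reducedEvenFractions {b d : ℕ} (hb : 0 < b) (hd : 0 < d) (hbd : b ≠ d) :
    Disjoint (reducedEvenFractions b) (reducedEvenFractions d) := by
  simp only [reducedEvenFractions, disjoint_left, mem_image, mem_filter, not_exists, not_and]
  rintro _ ⟨a, ⟨-, hab, -⟩, rfl⟩ c ⟨-, hcd, -⟩ h
  exact hbd (Rat.natCast_div_inj_of_coprime hd hb hcd hab h).2.symm

lemma exists_reduced_of_odd_of_even {α β : ℕ} (hα : Odd α) (hβ : Even β) (hβ0 : 0 < β)
    (hβα : β < α) : ∃ d a, d.Coprime a ∧ Odd d ∧ Even a ∧ 0 < a ∧ a < d ∧ d ≤ α ∧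
      (β : ℚ) / α = a / d := by
  obtain ⟨g, a, d, hg, hcop, rfl, rfl⟩ := Nat.exists_coprime' (Nat.gcd_pos_of_pos_left α hβ0)
  obtain ⟨hd, hgodd⟩ := Nat.odd_mul.mp hα
  have ha : Even a := (Nat.even_mul.mp hβ).resolve_right (Nat.not_even_iff_odd.mpr hgodd)
  refine ⟨d, a, hcop.symm, hd, ha, Nat.pos_of_mul_pos_right hβ0, Nat.lt_of_mul_lt_mul_right hβα,
    Nat.le_mul_of_pos_right d hg, ?_⟩
  push_cast
  exact mul_div_mul_right _ _ (by exact_mod_cast hg.ne')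

lemma setOf_div_eq_biUnion_reducedEvenFractions (m : ℕ) :
    {q : ℚ | ∃ α β : ℕ, 0 < α ∧ 0 < β ∧ Odd α ∧ Even β ∧ β < α ∧ α ≤ 2 * m + 1 ∧
        q = (β : ℚ) / α} = ↑((Icc 1 m).biUnion fun s => reducedEvenFractions (2 * s + 1)) := by
  ext q
  simp only [Set.mem_ofPred_eq, coe_biUnion, coe_Icc, Set.mem_Icc, Set.mem_iUnion, mem_coe,
    reducedEvenFractions, mem_image, mem_filter, mem_range, exists_prop]
  constructor
  · rintro ⟨α, β, -, hβ0, hα, hβ, hβα, hαn, rfl⟩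
    obtain ⟨d, a, hcop, ⟨s, rfl⟩, ha, ha0, had, hdα, hq⟩ :=
      exists_reduced_of_odd_of_even hα hβ hβ0 hβα
    exact ⟨s, ⟨by omega, by omega⟩, a, ⟨had, hcop, ha⟩, hq.symm⟩
  · rintro ⟨s, ⟨hs, hsm⟩, a, ⟨had, hcop, ha⟩, rfl⟩
    have ha0 := Nat.pos_of_coprime_of_one_lt hcop (by omega)
    exact ⟨2 * s + 1, a, by omega, ha0, odd_two_mul_add_one s, ha, had, by omega,
      by push_cast; rfl⟩

theorem stmt_2_general (m n : ℕ) (hn : n = 2 * m + 1) :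
    ({q : ℚ | ∃ α β : ℕ, 0 < α ∧ 0 < β ∧ Odd α ∧ Even β ∧ β < α ∧ α ≤ n ∧
        q = (β : ℚ) / α} : Set ℚ).Finite ∧
    2 * ({q : ℚ | ∃ α β : ℕ, 0 < α ∧ 0 < β ∧ Odd α ∧ Even β ∧ β < α ∧ α ≤ n ∧
        q = (β : ℚ) / α} : Set ℚ).ncard =
      ∑ s ∈ Finset.Icc 1 m, Nat.totient (2 * s + 1) := by
  rw [hn, setOf_div_eq_biUnion_reducedEvenFractions]
  refine ⟨finite_toSet _, ?_⟩
  rw [Set.ncard_coe_finset, card_biUnion fun s _ t _ hst => disjoint_reducedEvenFractions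
    (by omega) (by omega) (by omega), mul_sum]
  refine sum_congr rfl fun s hs => ?_
  rw [card_reducedEvenFractions (by omega),
    Nat.two_mul_card_filter_coprime_even (odd_two_mul_add_one s)
    (by simp only [mem_Icc] at hs; omega)]

/-- Proposition C(ii) restated for the set of critical values: for odd n = 2m+1, the set
    S_n = {β/α : (α,β) ∈ Γ_n} of rationals has cardinality (1/2)·∑_{s=1}^m φ(2s+1). -/
theorem stmt_2 (m n : ℕ) (hm : 1 ≤ m) (hn : n = 2 * m + 1) :
    ({q : ℚ | ∃ α β : ℕ, 0 < α ∧ 0 < β ∧ Odd α ∧ Even β ∧ β < α ∧ α ≤ n ∧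
        q = (β : ℚ) / α} : Set ℚ).Finite ∧
    2 * ({q : ℚ | ∃ α β : ℕ, 0 < α ∧ 0 < β ∧ Odd α ∧ Even β ∧ β < α ∧ α ≤ n ∧
        q = (β : ℚ) / α} : Set ℚ).ncard =
      ∑ s ∈ Finset.Icc 1 m, Nat.totient (2 * s + 1) :=
  stmt_2_general m n hn
end

section
/- For every natural number m ≥ 1, the integer identity 2·∑_{s=1}^{m} (−1)^{m+s}·s·C(2m+1, m−s) = (−1)^{m+1}·C(2m, m) holds. -/
/-!
Substituting `k = m - s`, the sum becomes `∑_{k ≤ m} (-1)^k (m - k) C(2m+1, k)`. The weight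
`m - k` counts the `j < m` with `k ≤ j`, so this is the sum over `j < m` of the alternating
partial sums `∑_{k ≤ j} (-1)^k C(2m+1, k) = (-1)^j C(2m, j)`, which in turn is the partial sum
`(-1)^(m-1) C(2m-1, m-1)`. Finally `2 C(2m-1, m-1) = C(2m, m)`.
-/

open Finset

theorem alternating_sum_range_sub_mul_choose (N n : ℕ) :
    ∑ k ∈ range (n + 2), (-1 : ℤ) ^ k * ((n + 1 : ℤ) - k) * (N + 2).choose k =
      (-1) ^ n * N.choose n := by
  induction n with
  | zero => simp [sum_range_succ]
  | succ n ih =>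
    calc ∑ k ∈ range (n + 1 + 2),
          (-1 : ℤ) ^ k * (((n + 1 : ℕ) : ℤ) + 1 - k) * (N + 2).choose k
        = ∑ k ∈ range (n + 2), (-1 : ℤ) ^ k * ((n + 1 : ℤ) - k) * (N + 2).choose k +
            ∑ k ∈ range (n + 2), (-1 : ℤ) ^ k * (N + 2).choose k := by
          rw [sum_range_succ, ← sum_add_distrib]
          push_cast
          rw [show (n : ℤ) + 1 + 1 - (n + 2) = 0 by ring, mul_zero, zero_mul, add_zero]
          exact sum_congr rfl fun k _ => by ring
      _ = (-1) ^ n * N.choose n + (-1) ^ (n + 1) * (N + 1).choose (n + 1) := by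
          rw [ih, Int.alternating_sum_range_choose_eq_choose]
      _ = (-1) ^ (n + 1) * N.choose (n + 1) := by
          rw [Nat.choose_succ_succ N]
          push_cast
          ring

theorem sum_Icc_neg_one_pow_mul_eq_sum_range_reflect (m : ℕ) (f : ℕ → ℤ) :
    ∑ s ∈ Icc 1 m, (-1 : ℤ) ^ (m + s) * s * f (m - s) =
      ∑ k ∈ range (m + 1), (-1 : ℤ) ^ k * ((m : ℤ) - k) * f k := by
  have hzero : ∀ s ∈ range (m + 1), s ∉ Icc 1 m →
      (-1 : ℤ) ^ (m + s) * s * f (m - s) = 0 := by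
    intro s hs hs'
    obtain rfl : s = 0 := by simp_all
    simp
  rw [sum_subset (fun s hs => by simp at hs ⊢; omega) hzero, ← sum_range_reflect]
  refine sum_congr rfl fun k hk => ?_
  have hk : k ≤ m := Nat.lt_succ_iff.mp (mem_range.mp hk)
  rw [Nat.add_sub_cancel, Nat.sub_sub_self hk, Nat.cast_sub hk,
    show m + (m - k) = k + 2 * (m - k) by omega, pow_add, pow_mul]
  simp

theorem Nat.two_mul_choose_eq_choose_two_mul (n : ℕ) :
    2 * (2 * n + 1).choose n = (2 * (n + 1)).choose (n + 1) := by
  rw [show 2 * (n + 1) = 2 * n + 1 + 1 by omega, Nat.choose_succ_succ, Nat.choose_symm_half,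
    two_mul]

/-- Ω₀ computation: 2·∑_{s=1}^{m} (−1)^{m+s}·s·C(2m+1, m−s) = (−1)^{m+1}·C(2m, m). -/
theorem stmt_9 (m : ℕ) (hm : 1 ≤ m) :
    (2 : ℤ) * ∑ s ∈ Finset.Icc 1 m,
        (-1) ^ (m + s) * (s : ℤ) * ((2 * m + 1).choose (m - s)) =
      (-1) ^ (m + 1) * ((2 * m).choose m) := by
  obtain ⟨n, rfl⟩ := Nat.exists_eq_add_of_le' hm
  rw [sum_Icc_neg_one_pow_mul_eq_sum_range_reflect (n + 1)
      fun k => ((2 * (n + 1) + 1).choose k : ℤ),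
    show 2 * (n + 1) + 1 = 2 * n + 1 + 2 by omega, Nat.cast_add_one,
    alternating_sum_range_sub_mul_choose, ← Nat.two_mul_choose_eq_choose_two_mul]
  push_cast
  ring
end

section
/- For every natural number m ≥ 1, the integer identity 2·∑_{s=1}^{m} (−1)^{m+s}·(s − ⌊s/2⌋)·C(2m+1, m−s) = (−1)^{m+1}·2^{2m−1} holds. -/
open Finset

private lemma L1 (n j : ℕ) :
    ∑ k ∈ range (j+1), (-1:ℤ)^k * ((n+1).choose k) = (-1)^j * (n.choose j) := by
  induction j with
  | zero => simp
  | succ j ih =>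
    rw [sum_range_succ, ih]
    have h : (((n+1).choose (j+1) : ℕ) : ℤ) = n.choose j + n.choose (j+1) := by
      exact_mod_cast congrArg (Nat.cast (R := ℤ)) (Nat.choose_succ_succ n j)
    rw [h]; ring

private lemma L2 (n j : ℕ) :
    ∑ k ∈ range (j+1), (-1:ℤ)^k * k * ((n+2).choose k)
      = (-1)^j * (n+2) * (((n+1).choose j : ℤ) - (n.choose j : ℤ)) := by
  induction j with
  | zero => simp
  | succ j ih =>
    rw [sum_range_succ, ih]
    have h1 : ((n:ℤ)+2) * ((n+1).choose j) = ((n+2).choose (j+1)) * ((j:ℤ)+1) := by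
      exact_mod_cast Nat.add_one_mul_choose_eq (n+1) j
    have h3 : (((n+1).choose (j+1) : ℕ) : ℤ) = n.choose j + n.choose (j+1) := by
      exact_mod_cast congrArg (Nat.cast (R := ℤ)) (Nat.choose_succ_succ n j)
    push_cast
    linear_combination ((-1:ℤ)^j) * h1 + ((-1:ℤ)^j*((n:ℤ)+2)) * h3

private lemma Lmod (d : ℕ) : (2:ℤ) * ((d % 2 : ℕ) : ℤ) = 1 - (-1)^d := by
  rcases Nat.even_or_odd d with h | h
  · simp [Nat.even_iff.mp h, h.neg_one_pow]
  · norm_num [Nat.odd_iff.mp h, h.neg_one_pow]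

/-- Theorem F(iii) computation: 2·∑_{s=1}^{m} (−1)^{m+s}·(s − ⌊s/2⌋)·C(2m+1, m−s)
    = (−1)^{m+1}·2^{2m−1}. -/
theorem stmt_10 (m : ℕ) (hm : 1 ≤ m) :
    (2 : ℤ) * ∑ s ∈ Finset.Icc 1 m,
        (-1) ^ (m + s) * ((s : ℤ) - (s / 2 : ℕ)) * ((2 * m + 1).choose (m - s)) =
      (-1) ^ (m + 1) * 2 ^ (2 * m - 1) := by
  have hm1 : m - 1 + 1 = m := by omega
  set S : ℤ := ∑ s ∈ Finset.Icc 1 m,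
      (-1 : ℤ) ^ (m + s) * ((s : ℤ) - (s / 2 : ℕ)) * ((2 * m + 1).choose (m - s)) with hS
  set A : ℤ := ∑ k ∈ range m, (-1:ℤ)^k * ((m:ℤ) - k) * ((2*m+1).choose k) with hAdef
  set X : ℤ := ∑ k ∈ range m, (-1:ℤ)^k * ((2*m+1).choose k) with hXdef
  set A2 : ℤ := ∑ k ∈ range m, (-1:ℤ)^k * k * ((2*m+1).choose k) with hA2def
  set T : ℤ := ∑ k ∈ range m, (((2*m+1).choose k : ℕ) : ℤ) with hTdef
  -- Step 1: reindex
  have h1 : S = ∑ k ∈ range m,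
      (-1 : ℤ) ^ (m + (m - k)) * (((m - k : ℕ) : ℤ) - (((m - k) / 2 : ℕ) : ℤ)) *
        ((2 * m + 1).choose (m - (m - k))) := by
    rw [hS, ← Finset.Ico_add_one_right_eq_Icc, Finset.sum_Ico_eq_sum_range]
    rw [show m + 1 - 1 = m from rfl]
    rw [← Finset.sum_range_reflect]
    refine sum_congr rfl fun k hk => ?_
    simp only [mem_range] at hk
    have e : 1 + (m - 1 - k) = m - k := by omega
    rw [e]
  -- Step 2: per-term times 4
  have h2 : (4:ℤ) * S = ∑ k ∈ range m,
      (2 * ((-1:ℤ)^k * ((m:ℤ) - k) * ((2*m+1).choose k)) + (-1:ℤ)^k * ((2*m+1).choose k)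
        - (-1:ℤ)^m * ((2*m+1).choose k)) := by
    rw [h1, mul_sum]
    refine sum_congr rfl fun k hk => ?_
    simp only [mem_range] at hk
    have hd : m - (m - k) = k := by omega
    rw [hd]
    have hpow : (-1:ℤ)^(m + (m - k)) = (-1:ℤ)^k := by
      have e : m + (m - k) = k + 2 * (m - k) := by omega
      rw [e, pow_add, pow_mul]; simp
    rw [hpow]
    have hcast : ((m - k : ℕ) : ℤ) = (m:ℤ) - k := by omega
    have hdiv : (2:ℤ) * (((m - k : ℕ) : ℤ) - (((m - k) / 2 : ℕ) : ℤ))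
        = ((m - k : ℕ) : ℤ) + (((m - k) % 2 : ℕ) : ℤ) := by omega
    have hmod := Lmod (m - k)
    have hmm : (-1:ℤ)^m = (-1:ℤ)^k * (-1:ℤ)^(m - k) := by
      rw [← pow_add]; congr 1; omega
    set C : ℤ := (((2*m+1).choose k : ℕ) : ℤ) with hCdef
    linear_combination (2*(-1:ℤ)^k*C) * hdiv + (2*(-1:ℤ)^k*C) * hcast
      + ((-1:ℤ)^k*C) * hmod + C * hmm
  -- Step 3: split
  have h3 : (4:ℤ) * S = 2 * A + X - (-1:ℤ)^m * T := by
    rw [h2, sum_sub_distrib, sum_add_distrib, ← mul_sum, ← mul_sum]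
  -- Step 4: evaluate pieces
  have hX : X = (-1:ℤ)^(m-1) * ((2*m).choose (m-1)) := by
    have h := L1 (2*m) (m-1)
    rw [hm1] at h
    exact h
  have hA2 : A2 = (-1:ℤ)^(m-1) * (((2*m-1:ℕ):ℤ) + 2) *
      (((2*m).choose (m-1) : ℤ) - ((2*m-1).choose (m-1) : ℤ)) := by
    have h := L2 (2*m-1) (m-1)
    rw [hm1, show 2*m-1+2 = 2*m+1 by omega, show 2*m-1+1 = 2*m by omega] at h
    exact h
  have hc : ((2*m-1:ℕ):ℤ) + 2 = 2*(m:ℤ) + 1 := by omega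
  have hT : T = 4^m - (((2*m+1).choose m : ℕ) : ℤ) := by
    have h := Nat.sum_range_choose_halfway m
    rw [sum_range_succ] at h
    have h' := congrArg (Nat.cast (R := ℤ)) h
    push_cast at h' ⊢
    linarith
  have hA : A = (m:ℤ) * X - A2 := by
    rw [hAdef, hXdef, hA2def, mul_sum, ← sum_sub_distrib]
    exact sum_congr rfl fun k _ => by ring
  -- Step 5: binomial facts
  have f1 : (((2*m).choose m : ℕ) : ℤ) * m = (((2*m).choose (m-1) : ℕ) : ℤ) * ((m:ℤ)+1) := by
    have h := Nat.choose_succ_right_eq (2*m) (m-1)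
    rw [hm1, show 2*m - (m-1) = m+1 by omega] at h
    exact_mod_cast h
  have f2 : (((2*m).choose m : ℕ) : ℤ) = 2 * (((2*m-1).choose (m-1) : ℕ) : ℤ) := by
    have e1 : 2*m = (2*m-1)+1 := by omega
    have h := Nat.choose_succ_succ (2*m-1) (m-1)
    simp only [Nat.succ_eq_add_one] at h
    rw [hm1, ← e1] at h
    have hsymm : (2*m-1).choose m = (2*m-1).choose (m-1) := by
      have h2 := Nat.choose_symm (show m ≤ 2*m-1 by omega)
      rw [show 2*m-1-m = m-1 by omega] at h2
      exact h2.symm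
    rw [hsymm] at h
    rw [h]; push_cast; ring
  have f4 : (((2*m+1).choose m : ℕ) : ℤ)
      = (((2*m).choose (m-1) : ℕ) : ℤ) + (((2*m).choose m : ℕ) : ℤ) := by
    have h := Nat.choose_succ_succ (2*m) (m-1)
    simp only [Nat.succ_eq_add_one] at h
    rw [hm1] at h
    exact_mod_cast h
  -- Step 6: powers
  have hpm : (-1:ℤ)^m = -(-1:ℤ)^(m-1) := by
    have h : (-1:ℤ)^((m-1)+1) = -(-1:ℤ)^(m-1) := by rw [pow_succ]; ring
    rwa [hm1] at h
  have hp1 : (-1:ℤ)^(m+1) = (-1:ℤ)^(m-1) := by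
    have h : (-1:ℤ)^((m-1)+2) = (-1:ℤ)^(m-1) := by rw [pow_add]; norm_num
    rwa [show (m-1)+2 = m+1 by omega] at h
  have hpow4 : (4:ℤ)^m = 2^(2*m-1) * 2 := by
    have h : (4:ℤ)^m = 2^(2*m) := by rw [pow_mul]; norm_num
    rw [h, ← pow_succ]
    congr 1
    omega
  -- Final assembly
  have final : 4 * S = (-1:ℤ)^(m+1) * 2^(2*m-1) * 2 := by
    linear_combination h3 + 2*hA + (2*(m:ℤ)+1)*hX - 2*hA2
      - 2*((-1:ℤ)^(m-1))*((((2*m).choose (m-1) : ℕ) : ℤ) - (((2*m-1).choose (m-1) : ℕ) : ℤ))*hc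
      + ((-1:ℤ)^(m-1))*hT - T*hpm - ((-1:ℤ)^(m-1))*f4
      - (1 + 2*(m:ℤ))*((-1:ℤ)^(m-1))*f2 + 2*((-1:ℤ)^(m-1))*f1
      - 2^(2*m-1)*2*hp1 + ((-1:ℤ)^(m-1))*hpow4
  linarith [final]
end

section
/- For every natural number m ≥ 1, ∑_{i=0}^{m+1} (−1)^i·⌊i/2⌋·C(2m+1, m+i) = 2^{2m−2}. -/
/-- Double Pascal. -/
lemma pascal2 (n k : ℕ) :
    (n + 2).choose (k + 2) = n.choose k + 2 * n.choose (k + 1) + n.choose (k + 2) := by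
  rw [Nat.choose_succ_succ (n + 1) (k + 1), Nat.choose_succ_succ n k,
    Nat.choose_succ_succ n (k + 1)]
  ring

/-- Telescoping auxiliary function. -/
def Gaux (M j : ℕ) : ℤ :=
  (-1) ^ j * (((j + 1) / 2 : ℕ) * ((2 * M + 1).choose (M + j))
    + ((j / 2 : ℕ)) * ((2 * M + 1).choose (M + j + 1)))

lemma pointwise (M j : ℕ) :
    (-1 : ℤ) ^ (j + 1) * (((j + 1) / 2 : ℕ)) * ((2 * M + 3).choose (M + j + 2))
      = ((2 * M + 1).choose (M + j + 1) : ℤ) + (Gaux M (j + 1) - Gaux M j) := by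
  have hp : (2 * M + 3).choose (M + j + 2)
      = (2 * M + 1).choose (M + j) + 2 * (2 * M + 1).choose (M + j + 1)
        + (2 * M + 1).choose (M + j + 2) := pascal2 (2 * M + 1) (M + j)
  simp only [Gaux, hp]
  rcases Nat.even_or_odd j with ⟨t, rfl⟩ | ⟨t, rfl⟩
  · have h1 : (t + t + 1) / 2 = t := by omega
    have h2 : (t + t + 1 + 1) / 2 = t + 1 := by omega
    have h3 : (t + t) / 2 = t := by omega
    have e1 : (-1 : ℤ) ^ (t + t) = 1 := Even.neg_one_pow ⟨t, rfl⟩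
    have e2 : (-1 : ℤ) ^ (t + t + 1) = -1 := Odd.neg_one_pow ⟨t, by ring⟩
    rw [h1, h2, h3, e1, e2]
    push_cast
    ring
  · have h1 : (2 * t + 1 + 1) / 2 = t + 1 := by omega
    have h2 : (2 * t + 1 + 1 + 1) / 2 = t + 1 := by omega
    have h3 : (2 * t + 1) / 2 = t := by omega
    have e1 : (-1 : ℤ) ^ (2 * t + 1) = -1 := Odd.neg_one_pow ⟨t, rfl⟩
    have e2 : (-1 : ℤ) ^ (2 * t + 1 + 1) = 1 := Even.neg_one_pow ⟨t + 1, by ring⟩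
    rw [h1, h2, h3, e1, e2]
    push_cast
    ring

lemma halfsum (M : ℕ) :
    ∑ j ∈ Finset.range (M + 2), (2 * M + 1).choose (M + 1 + j) = 4 ^ M := by
  rw [Finset.sum_range_succ]
  have h0 : (2 * M + 1).choose (M + 1 + (M + 1)) = 0 := by
    apply Nat.choose_eq_zero_of_lt; omega
  rw [h0, add_zero]
  have hsym : ∀ j ∈ Finset.range (M + 1),
      (2 * M + 1).choose (M + 1 + j) = (2 * M + 1).choose (M + 1 - 1 - j) := by
    intro j hj
    simp only [Finset.mem_range] at hj
    have : (2 * M + 1) - (M + 1 + j) = M + 1 - 1 - j := by omega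
    rw [← this, Nat.choose_symm (by omega)]
  rw [Finset.sum_congr rfl hsym, Finset.sum_range_reflect (fun j => (2 * M + 1).choose j)]
  exact Nat.sum_range_choose_halfway M

/-- Binomial identity from [K11]: ∑_{i=0}^{m+1} (−1)^i·⌊i/2⌋·C(2m+1, m+i) = 2^{2m−2}. -/
theorem stmt_11 (m : ℕ) (hm : 1 ≤ m) :
    ∑ i ∈ Finset.range (m + 2),
        (-1 : ℤ) ^ i * (i / 2 : ℕ) * ((2 * m + 1).choose (m + i)) =
      2 ^ (2 * m - 2) := by
  obtain ⟨M, rfl⟩ : ∃ M, m = M + 1 := ⟨m - 1, by omega⟩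
  have harith : M + 1 + 2 = M + 2 + 1 := by ring
  rw [harith, Finset.sum_range_succ']
  have hcongr : ∀ j ∈ Finset.range (M + 2),
      (-1 : ℤ) ^ (j + 1) * ((j + 1) / 2 : ℕ) * ((2 * (M + 1) + 1).choose (M + 1 + (j + 1)))
        = ((2 * M + 1).choose (M + 1 + j) : ℤ) + (Gaux M (j + 1) - Gaux M j) := by
    intro j _
    have e1 : 2 * (M + 1) + 1 = 2 * M + 3 := by ring
    have e2 : M + 1 + (j + 1) = M + j + 2 := by ring
    have e3 : M + 1 + j = M + j + 1 := by ring
    rw [e1, e2, e3]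
    exact pointwise M j
  rw [Finset.sum_congr rfl hcongr, Finset.sum_add_distrib, Finset.sum_range_sub (Gaux M)]
  have hG0 : Gaux M 0 = 0 := by simp [Gaux]
  have hGend : Gaux M (M + 2) = 0 := by
    have c1 : (2 * M + 1).choose (M + (M + 2)) = 0 := by
      apply Nat.choose_eq_zero_of_lt; omega
    have c2 : (2 * M + 1).choose (M + (M + 2) + 1) = 0 := by
      apply Nat.choose_eq_zero_of_lt; omega
    simp [Gaux, c1, c2]
  have hz : (-1 : ℤ) ^ 0 * ((0 : ℕ) / 2 : ℕ) * ((2 * (M + 1) + 1).choose (M + 1 + 0)) = 0 := by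
    norm_num
  rw [hG0, hGend, hz]
  have hs : ∑ j ∈ Finset.range (M + 2), ((2 * M + 1).choose (M + 1 + j) : ℤ) = 4 ^ M := by
    rw [← Nat.cast_sum]
    exact_mod_cast congrArg (Nat.cast : ℕ → ℤ) (halfsum M)
  rw [hs]
  have : 2 * (M + 1) - 2 = 2 * M := by omega
  rw [this]
  rw [pow_mul]
  norm_num
end

section
/- For every natural number s ≥ 1, the number of integers t with ⌊s/2⌋ + 1 ≤ t ≤ s and gcd(t, 2s+1) = 1 equals the number of integers i with 1 ≤ i ≤ 2⌊(s+1)/2⌋ − 1 and gcd(i, 4s+2) = 1. -/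
lemma gcd_key (s t : ℕ) (h : 2 * t ≤ 2 * s) :
    Nat.gcd (2 * s + 1 - 2 * t) (4 * s + 2) = 1 ↔ Nat.gcd t (2 * s + 1) = 1 := by
  set n := 2 * s + 1 with hn
  have h42 : 4 * s + 2 = 2 * n := by omega
  rw [h42]
  show Nat.Coprime (n - 2 * t) (2 * n) ↔ Nat.Coprime t n
  rw [Nat.coprime_mul_iff_right]
  have hle : 2 * t ≤ n := by omega
  have h1 : Nat.Coprime (n - 2 * t) 2 := by
    have : (n - 2 * t) % 2 = 1 := by omega
    simp [Nat.coprime_two_right, Nat.odd_iff, this]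
  have h2 : Nat.Coprime (n - 2 * t) n ↔ Nat.Coprime t n := by
    have e1 : Nat.gcd (n - 2 * t) (n - (n - 2 * t)) = Nat.gcd (n - 2 * t) n :=
      Nat.gcd_sub_self_right (by omega)
    have e2 : n - (n - 2 * t) = 2 * t := by omega
    have e3 : Nat.gcd (n - 2 * t) (2 * t) = Nat.gcd n (2 * t) :=
      Nat.gcd_sub_self_left hle
    unfold Nat.Coprime
    rw [← e1, e2, e3, Nat.gcd_comm]
    show Nat.Coprime (2 * t) n ↔ _
    rw [Nat.coprime_mul_iff_left]
    have h2n : Nat.Coprime 2 n := by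
      rw [Nat.coprime_comm]
      have : n % 2 = 1 := by omega
      simp [Nat.coprime_two_right, Nat.odd_iff, this]
    have hOdd : Odd n := ⟨s, by omega⟩
    simp [h2n, hOdd]
  tauto

/-- Lemma 7.1: the number of t with ⌊s/2⌋+1 ≤ t ≤ s coprime to 2s+1 equals the number of
    i with 1 ≤ i ≤ 2⌊(s+1)/2⌋−1 coprime to 4s+2, i.e. φ(2⌊(s+1)/2⌋−1, 4s+2). -/
theorem stmt_12 (s : ℕ) (hs : 1 ≤ s) :
    ((Finset.Icc (s / 2 + 1) s).filter (fun t => Nat.gcd t (2 * s + 1) = 1)).card =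
      ((Finset.Icc 1 (2 * ((s + 1) / 2) - 1)).filter
        (fun i => Nat.gcd i (4 * s + 2) = 1)).card := by
  apply Finset.card_bij (fun t _ => 2 * s + 1 - 2 * t)
  · intro t ht
    simp only [Finset.mem_filter, Finset.mem_Icc] at ht ⊢
    refine ⟨⟨by omega, by omega⟩, ?_⟩
    exact (gcd_key s t (by omega)).mpr ht.2
  · intro a ha b hb hab
    simp only [Finset.mem_filter, Finset.mem_Icc] at ha hb
    omega
  · intro i hi
    simp only [Finset.mem_filter, Finset.mem_Icc] at hi
    have hodd : i % 2 = 1 := by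
      rcases Nat.even_or_odd i with he | ho
      · exfalso
        obtain ⟨k, hk⟩ := he
        have : 2 ∣ Nat.gcd i (4 * s + 2) := Nat.dvd_gcd (by omega) (by omega)
        omega
      · exact Nat.odd_iff.mp ho
    refine ⟨(2 * s + 1 - i) / 2, ?_, by omega⟩
    simp only [Finset.mem_filter, Finset.mem_Icc]
    refine ⟨⟨by omega, by omega⟩, ?_⟩
    have := (gcd_key s ((2 * s + 1 - i) / 2) (by omega)).mp
    have e : 2 * s + 1 - 2 * ((2 * s + 1 - i) / 2) = i := by omega
    rw [e] at this
    exact this hi.2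
end

section
/- For every natural number m ≥ 1, the finite set of rational numbers θ = {2t/(2s+1) : s, t integers, 1 ≤ s ≤ m, ⌊s/2⌋ + 1 ≤ t ≤ s} has cardinality ∑_{s=1}^{m} φ(2⌊(s+1)/2⌋ − 1, 4s+2), where the Legendre totient φ(x, d) is the number of positive integers ≤ x that are coprime to d. -/
/-- gcd (n - m) n = gcd m n for m ≤ n. -/
lemma gcd_sub_left_self {m n : ℕ} (h : m ≤ n) : Nat.gcd (n - m) n = Nat.gcd m n := by
  have h1 := Nat.gcd_add_self_right (n - m) m
  rw [show m + (n - m) = n by omega] at h1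
  rw [h1, Nat.gcd_sub_self_left h, Nat.gcd_comm]

/-- Proof of Theorem F(i): the set θ = {2t/(2s+1) : 1 ≤ s ≤ m, ⌊s/2⌋+1 ≤ t ≤ s} has
    cardinality ψ(n) = ∑_{s=1}^m φ(2⌊(s+1)/2⌋−1, 4s+2), where the Legendre totient
    φ(x, d) counts the positive integers ≤ x coprime to d. -/
theorem stmt_13 (m : ℕ) (hm : 1 ≤ m) :
    ({q : ℚ | ∃ s t : ℕ, 1 ≤ s ∧ s ≤ m ∧ s / 2 + 1 ≤ t ∧ t ≤ s ∧
        q = 2 * (t : ℚ) / (2 * s + 1)} : Set ℚ).ncard =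
      ∑ s ∈ Finset.Icc 1 m,
        ((Finset.Icc 1 (2 * ((s + 1) / 2) - 1)).filter
          (fun i => Nat.gcd i (4 * s + 2) = 1)).card := by
  classical
  set T : ℕ → Finset ℕ := fun s =>
    (Finset.Icc (s / 2 + 1) s).filter (fun t => Nat.gcd t (2 * s + 1) = 1) with hT
  set P : Finset ((_ : ℕ) × ℕ) := (Finset.Icc 1 m).sigma T with hP
  set f : (_ : ℕ) × ℕ → ℚ := fun p => 2 * (p.2 : ℚ) / (2 * p.1 + 1) with hf
  have key : ∀ p ∈ P, 1 ≤ p.1 ∧ p.1 ≤ m ∧ p.1 / 2 + 1 ≤ p.2 ∧ p.2 ≤ p.1 ∧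
      Nat.gcd p.2 (2 * p.1 + 1) = 1 := by
    rintro ⟨s, t⟩ hp
    simp only [hP, hT, Finset.mem_sigma, Finset.mem_filter, Finset.mem_Icc] at hp
    tauto
  have hinj : Set.InjOn f ↑P := by
    rintro ⟨s, t⟩ hp ⟨s', t'⟩ hp' hq
    obtain ⟨hs1, -, hst, hts, hg⟩ := key _ (by simpa using hp)
    obtain ⟨hs1', -, hst', hts', hg'⟩ := key _ (by simpa using hp')
    simp only [hf] at hq
    have h1 : (2 * (s : ℚ) + 1) ≠ 0 := by positivity
    have h2 : (2 * (s' : ℚ) + 1) ≠ 0 := by positivity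
    rw [div_eq_div_iff h1 h2] at hq
    have hq' : t * (2 * s' + 1) = t' * (2 * s + 1) := by
      have : ((t * (2 * s' + 1) : ℕ) : ℚ) = ((t' * (2 * s + 1) : ℕ) : ℚ) := by
        push_cast; linarith
      exact_mod_cast this
    have hd1 : (2 * s + 1) ∣ (2 * s' + 1) := by
      have : (2 * s + 1) ∣ t * (2 * s' + 1) := hq' ▸ dvd_mul_left _ _
      exact (Nat.Coprime.dvd_mul_left (Nat.Coprime.symm hg)).mp this
    have hd2 : (2 * s' + 1) ∣ (2 * s + 1) := by
      have : (2 * s' + 1) ∣ t' * (2 * s + 1) := hq' ▸ dvd_mul_left _ _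
      exact (Nat.Coprime.dvd_mul_left (Nat.Coprime.symm hg')).mp this
    have hss : s = s' := by have := Nat.dvd_antisymm hd1 hd2; omega
    subst hss
    have htt : t = t' := by
      have := Nat.eq_of_mul_eq_mul_right (show 0 < 2 * s + 1 by omega) hq'
      exact this
    simp [htt]
  have hset : ({q : ℚ | ∃ s t : ℕ, 1 ≤ s ∧ s ≤ m ∧ s / 2 + 1 ≤ t ∧ t ≤ s ∧
      q = 2 * (t : ℚ) / (2 * s + 1)} : Set ℚ) = ↑(P.image f) := by
    ext q
    simp only [Set.mem_setOf_eq, Finset.coe_image, Set.mem_image, Finset.mem_coe]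
    constructor
    · rintro ⟨s, t, hs1, hsm, hst, hts, rfl⟩
      set g := Nat.gcd t (2 * s + 1) with hgdef
      have hgpos : 0 < g := Nat.gcd_pos_of_pos_right _ (by omega)
      obtain ⟨t', ht'⟩ : g ∣ t := Nat.gcd_dvd_left _ _
      obtain ⟨b, hb⟩ : g ∣ 2 * s + 1 := Nat.gcd_dvd_right _ _
      have hcop : Nat.Coprime t' b := by
        have := Nat.coprime_div_gcd_div_gcd (m := t) (n := 2 * s + 1) hgpos
        rwa [← hgdef, ht', hb, Nat.mul_div_cancel_left _ hgpos,
          Nat.mul_div_cancel_left _ hgpos] at this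
      obtain ⟨k, hk⟩ : ∃ k, b = 2 * k + 1 := by
        rcases Nat.even_or_odd b with he | ho
        · obtain ⟨c, hc⟩ := he
          exfalso
          have : 2 * s + 1 = 2 * (g * c) := by rw [hb, hc]; ring
          omega
        · obtain ⟨c, hc⟩ := ho; exact ⟨c, hc⟩
      have ht'pos : 1 ≤ t' := by
        rcases Nat.eq_zero_or_pos t' with h | h
        · exfalso; rw [h, Nat.mul_zero] at ht'; omega
        · exact h
      have h1 : 2 * s + 1 < 4 * t := by omega
      have h2 : 2 * t < 2 * s + 1 := by omega
      have hb4 : b < 4 * t' := by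
        have hgb : g * b < g * (4 * t') := by
          rw [← hb]
          calc 2 * s + 1 < 4 * t := h1
            _ = g * (4 * t') := by rw [ht']; ring
        exact Nat.lt_of_mul_lt_mul_left hgb
      have h2b : 2 * t' < b := by
        have hgb : g * (2 * t') < g * b := by
          rw [← hb]
          calc g * (2 * t') = 2 * t := by rw [ht']; ring
            _ < 2 * s + 1 := h2
        exact Nat.lt_of_mul_lt_mul_left hgb
      have hble : b ≤ 2 * s + 1 := Nat.le_of_dvd (by omega) ⟨g, by rw [hb]; ring⟩
      refine ⟨⟨k, t'⟩, ?_, ?_⟩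
      · simp only [hP, hT, Finset.mem_sigma, Finset.mem_filter, Finset.mem_Icc]
        refine ⟨⟨by omega, by omega⟩, ⟨by omega, by omega⟩, ?_⟩
        rwa [← hk]
      · simp only [hf]
        have hcast : 2 * (s : ℚ) + 1 = (g : ℚ) * (2 * k + 1) := by
          have : ((2 * s + 1 : ℕ) : ℚ) = ((g * (2 * k + 1) : ℕ) : ℚ) := by
            rw [hb, hk]
          push_cast at this; linarith
        have hg0 : (g : ℚ) ≠ 0 := by positivity
        rw [div_eq_div_iff (by positivity) (by positivity)]
        have htcast : (t : ℚ) = (g : ℚ) * t' := by exact_mod_cast ht'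
        rw [htcast, hcast]; ring
    · rintro ⟨⟨s, t⟩, hp, rfl⟩
      obtain ⟨hs1, hsm, hst, hts, hg⟩ := key _ hp
      exact ⟨s, t, hs1, hsm, hst, hts, rfl⟩
  rw [hset, Set.ncard_coe_finset, Finset.card_image_of_injOn hinj, hP,
    Finset.card_sigma]
  refine Finset.sum_congr rfl ?_
  intro s hs
  rw [Finset.mem_Icc] at hs
  refine Finset.card_bij' (fun t _ => 2 * s + 1 - 2 * t)
    (fun i _ => (2 * s + 1 - i) / 2) ?_ ?_ ?_ ?_
  · intro t ht
    simp only [hT, Finset.mem_filter, Finset.mem_Icc] at ht ⊢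
    obtain ⟨⟨hlo, hhi⟩, hg⟩ := ht
    refine ⟨⟨by omega, by omega⟩, ?_⟩
    have hodd : Nat.Coprime (2 * s + 1 - 2 * t) 2 := by
      rw [Nat.coprime_two_right]
      exact ⟨s - t, by omega⟩
    have hco : Nat.Coprime (2 * s + 1 - 2 * t) (2 * s + 1) := by
      rw [Nat.Coprime, gcd_sub_left_self (by omega)]
      have h2 : Nat.Coprime 2 (2 * s + 1) := by
        rw [Nat.coprime_two_left]; exact ⟨s, by omega⟩
      exact Nat.Coprime.mul (h2) hg
    have : Nat.Coprime (2 * s + 1 - 2 * t) (2 * (2 * s + 1)) :=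
      Nat.Coprime.mul_right hodd hco
    rw [show 4 * s + 2 = 2 * (2 * s + 1) by ring]
    exact this
  · intro i hi
    simp only [hT, Finset.mem_filter, Finset.mem_Icc] at hi ⊢
    obtain ⟨⟨hlo, hhi⟩, hg⟩ := hi
    have hodd : ¬ (2 ∣ i) := by
      intro h
      have : 2 ∣ Nat.gcd i (4 * s + 2) := Nat.dvd_gcd h ⟨2 * s + 1, by ring⟩
      omega
    obtain ⟨c, hc⟩ : ∃ c, i = 2 * c + 1 := ⟨i / 2, by omega⟩
    have hco : Nat.Coprime i (2 * s + 1) := by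
      have : (2 * s + 1) ∣ 4 * s + 2 := ⟨2, by ring⟩
      exact Nat.Coprime.coprime_dvd_right this hg
    refine ⟨⟨by omega, by omega⟩, ?_⟩
    have h2t : 2 * ((2 * s + 1 - i) / 2) = 2 * s + 1 - i := by omega
    have : Nat.Coprime (2 * ((2 * s + 1 - i) / 2)) (2 * s + 1) := by
      rw [h2t, Nat.Coprime, gcd_sub_left_self (by omega)]
      exact hco
    exact Nat.Coprime.coprime_dvd_left ⟨2, by ring⟩ this
  · intro t ht
    simp only [hT, Finset.mem_filter, Finset.mem_Icc] at ht
    show (2 * s + 1 - (2 * s + 1 - 2 * t)) / 2 = t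
    omega
  · intro i hi
    simp only [Finset.mem_filter, Finset.mem_Icc] at hi
    obtain ⟨⟨hlo, hhi⟩, hg⟩ := hi
    have hodd : ¬ (2 ∣ i) := by
      intro h
      have : 2 ∣ Nat.gcd i (4 * s + 2) := Nat.dvd_gcd h ⟨2 * s + 1, by ring⟩
      omega
    show 2 * s + 1 - 2 * ((2 * s + 1 - i) / 2) = i
    omega
end

section
/- For every odd natural number n = 2m+1 with m ≥ 1, the number of elements q of S_n with q < 1/2 equals Φ(n) − ψ(n), i.e., equals (1/2)·∑_{s=1}^{m} φ(2s+1) minus ∑_{s=1}^{m} φ(2⌊(s+1)/2⌋ − 1, 4s+2). -/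
/-!
Every element of `S_n` has a reduced form `b / a` with `a` odd, `b` even and `a ≤ n`, and
conversely; so the elements below `1/2` are counted, denominator by denominator, by the even
residues `b` coprime to `a = 2s+1` with `2b < a`. The reflection `b ↦ a - b` swaps the two halves
of the residues coprime to `a`, so the lower half has `φ(a)/2` elements; the odd ones among them
are exactly those counted by `φ(2⌊(s+1)/2⌋ - 1, 4s+2)`.
-/

open Finset

def lowerCoprimeResidues (a : ℕ) : Finset ℕ := {b ∈ range a | a.Coprime b ∧ 2 * b < a}

lemma two_mul_card_lowerCoprimeResidues {a : ℕ} (ha : Odd a) (h1 : 1 < a) :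
    2 * #(lowerCoprimeResidues a) = Nat.totient a := by
  have ha2 := Nat.odd_iff.1 ha
  have hcop_sub : ∀ b < a, a.Coprime b → a.Coprime (a - b) ∧ b ≠ 0 := by
    intro b hb hcop
    refine ⟨?_, ?_⟩
    · rwa [Nat.coprime_comm, Nat.coprime_self_sub_left hb.le, Nat.coprime_comm]
    · rintro rfl
      rw [Nat.coprime_zero_right] at hcop
      omega
  have hreflect : #{b ∈ range a | a.Coprime b ∧ ¬2 * b < a} = #(lowerCoprimeResidues a) := by
    apply card_nbij' (a - ·) (a - ·)
    · intro b hb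
      simp only [lowerCoprimeResidues, mem_coe, mem_filter, mem_range] at hb ⊢
      exact ⟨by omega, (hcop_sub b hb.1 hb.2.1).1, by omega⟩
    · intro b hb
      simp only [lowerCoprimeResidues, mem_coe, mem_filter, mem_range] at hb ⊢
      obtain ⟨hcop, hb0⟩ := hcop_sub b hb.1 hb.2.1
      exact ⟨by omega, hcop, by omega⟩
    all_goals
      intro b hb
      simp only [lowerCoprimeResidues, mem_coe, mem_filter, mem_range] at hb
      dsimp only
      omega
  rw [Nat.totient_eq_card_coprime,
    ← card_filter_add_card_filter_not (s := {b ∈ range a | a.Coprime b}) (fun b => 2 * b < a),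
    filter_filter, filter_filter, hreflect, lowerCoprimeResidues, two_mul]

lemma filter_Icc_gcd_four_mul_add_two_eq (s : ℕ) :
    {i ∈ Icc 1 (2 * ((s + 1) / 2) - 1) | Nat.gcd i (4 * s + 2) = 1} =
      {b ∈ lowerCoprimeResidues (2 * s + 1) | ¬Even b} := by
  ext i
  have hcop : Nat.gcd i (4 * s + 2) = 1 ↔ Odd i ∧ (2 * s + 1).Coprime i := by
    rw [← Nat.Coprime, show 4 * s + 2 = 2 * (2 * s + 1) by ring, Nat.coprime_mul_iff_right,
      Nat.coprime_two_right, Nat.coprime_comm]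
  simp only [lowerCoprimeResidues, mem_filter, mem_Icc, mem_range, hcop, Nat.not_even_iff_odd]
  constructor
  · rintro ⟨⟨h1, h2⟩, ⟨j, rfl⟩, hc⟩
    exact ⟨⟨by omega, hc, by omega⟩, j, rfl⟩
  · rintro ⟨⟨-, hc, h2⟩, ⟨j, rfl⟩⟩
    exact ⟨⟨by omega, by omega⟩, ⟨j, rfl⟩, hc⟩

lemma Rat.lt_half_iff_two_mul_num_lt_den {q : ℚ} : q < 1 / 2 ↔ 2 * q.num < q.den := by
  conv_lhs => rw [← Rat.num_div_den q]
  rw [div_lt_div_iff₀ (by positivity) two_pos, mul_comm, one_mul]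
  norm_cast

lemma Rat.num_den_natCast_div_of_coprime {a b : ℕ} (ha : 0 < a) (h : a.Coprime b) :
    ((b : ℚ) / a).num = b ∧ ((b : ℚ) / a).den = a := by
  have hc : (b : ℤ).natAbs.Coprime (a : ℤ).natAbs := by simpa using h.symm
  have hnum := Rat.num_div_eq_of_coprime (by exact_mod_cast ha) hc
  have hden := Rat.den_div_eq_of_coprime (by exact_mod_cast ha) hc
  push_cast at hnum hden
  exact ⟨hnum, by exact_mod_cast hden⟩

lemma exists_odd_even_div_iff {q : ℚ} {n : ℕ} :
    (∃ α β : ℕ, 0 < α ∧ 0 < β ∧ Odd α ∧ Even β ∧ β < α ∧ α ≤ n ∧ q = β / α) ↔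
      0 < q ∧ q < 1 ∧ Odd q.den ∧ Even q.num ∧ q.den ≤ n := by
  constructor
  · rintro ⟨α, β, hα, hβ, hαodd, hβeven, hβα, hαn, rfl⟩
    have hden : (β / α : ℚ).den ∣ α := by
      have := Rat.den_dvd β α
      rwa [← Rat.natCast_div_eq_divInt, Int.natCast_dvd_natCast] at this
    have hcross : (β / α : ℚ).num * α = β * (β / α : ℚ).den := by
      have := Rat.mul_den_eq_num (β / α : ℚ)
      field_simp at this
      rw [mul_comm]
      exact_mod_cast this.symm
    have hnum : Even ((β / α : ℚ).num * α) := by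
      rw [hcross]
      exact (Int.even_coe_nat β).2 hβeven |>.mul_right _
    refine ⟨by positivity, (div_lt_one (by positivity)).2 (by exact_mod_cast hβα),
      hαodd.of_dvd_nat hden, ?_, (Nat.le_of_dvd hα hden).trans hαn⟩
    rcases Int.even_mul.1 hnum with h | h
    · exact h
    · exact absurd ((Int.even_coe_nat α).1 h) (Nat.not_even_iff_odd.2 hαodd)
  · rintro ⟨hq0, hq1, hodd, heven, hle⟩
    have hnum0 : 0 < q.num := Rat.num_pos.2 hq0
    have hcast : ((q.num.natAbs : ℕ) : ℤ) = q.num := Int.natAbs_of_nonneg hnum0.le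
    refine ⟨q.den, q.num.natAbs, q.pos, by omega, hodd, Int.natAbs_even.2 heven, ?_, hle, ?_⟩
    · have := Rat.num_lt_denom_iff.2 hq1
      omega
    · rw [← Int.cast_natCast, hcast, Rat.num_div_den]

def lowerEvenFractions (a : ℕ) : Finset ℚ :=
  {b ∈ lowerCoprimeResidues a | Even b}.image fun b : ℕ => (b : ℚ) / a

lemma mem_lowerEvenFractions {a : ℕ} {q : ℚ} (h1 : 1 < a) :
    q ∈ lowerEvenFractions a ↔ q.den = a ∧ 0 < q ∧ q < 1 / 2 ∧ Even q.num := by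
  simp only [lowerEvenFractions, lowerCoprimeResidues, mem_image, mem_filter, mem_range]
  constructor
  · rintro ⟨b, ⟨⟨-, hcop, hlt⟩, heven⟩, rfl⟩
    obtain ⟨hnum, hden⟩ := Rat.num_den_natCast_div_of_coprime (by omega) hcop
    have hb0 : b ≠ 0 := by
      rintro rfl
      rw [Nat.coprime_zero_right] at hcop
      omega
    rw [← Rat.num_pos, Rat.lt_half_iff_two_mul_num_lt_den, hnum, hden]
    exact ⟨rfl, by omega, by omega, (Int.even_coe_nat b).2 heven⟩
  · rintro ⟨rfl, hq0, hhalf, heven⟩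
    have hnum0 : 0 < q.num := Rat.num_pos.2 hq0
    have hcast : ((q.num.natAbs : ℕ) : ℤ) = q.num := Int.natAbs_of_nonneg hnum0.le
    rw [Rat.lt_half_iff_two_mul_num_lt_den] at hhalf
    refine ⟨q.num.natAbs, ⟨⟨by omega, q.reduced.symm, by omega⟩, Int.natAbs_even.2 heven⟩, ?_⟩
    rw [← Int.cast_natCast, hcast, Rat.num_div_den]

lemma setOf_lt_half_eq_biUnion_lowerEvenFractions (m : ℕ) :
    {q : ℚ | (∃ α β : ℕ, 0 < α ∧ 0 < β ∧ Odd α ∧ Even β ∧ β < α ∧ α ≤ 2 * m + 1 ∧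
        q = (β : ℚ) / α) ∧ q < 1 / 2} =
      ↑((Icc 1 m).biUnion fun s => lowerEvenFractions (2 * s + 1)) := by
  ext q
  simp only [Set.mem_ofPred_eq, exists_odd_even_div_iff, coe_biUnion, mem_coe, mem_Icc,
    Set.mem_iUnion, exists_prop]
  constructor
  · rintro ⟨⟨hq0, -, ⟨s, hs⟩, heven, hle⟩, hhalf⟩
    have h2 := Rat.lt_half_iff_two_mul_num_lt_den.1 hhalf
    have h0 := Rat.num_pos.2 hq0
    exact ⟨s, ⟨by omega, by omega⟩, (mem_lowerEvenFractions (by omega)).2 ⟨hs, hq0, hhalf, heven⟩⟩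
  · rintro ⟨s, ⟨hs1, hsm⟩, hq⟩
    obtain ⟨hden, hq0, hhalf, heven⟩ := (mem_lowerEvenFractions (by omega)).1 hq
    exact ⟨⟨hq0, by linarith, hden ▸ odd_two_mul_add_one s, heven, by omega⟩, hhalf⟩

lemma card_lowerEvenFractions (a : ℕ) :
    #(lowerEvenFractions a) = #{b ∈ lowerCoprimeResidues a | Even b} := by
  rcases a.eq_zero_or_pos with rfl | ha
  · simp [lowerEvenFractions, lowerCoprimeResidues]
  · exact card_image_of_injective _ fun b c h => by
      simpa [ha.ne'] using h

theorem stmt_14_general (m n : ℕ) (hn : n = 2 * m + 1) :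
    ({q : ℚ | (∃ α β : ℕ, 0 < α ∧ 0 < β ∧ Odd α ∧ Even β ∧ β < α ∧ α ≤ n ∧
        q = (β : ℚ) / α) ∧ q < 1 / 2} : Set ℚ).ncard =
      (∑ s ∈ Finset.Icc 1 m, Nat.totient (2 * s + 1)) / 2 -
        ∑ s ∈ Finset.Icc 1 m,
          ((Finset.Icc 1 (2 * ((s + 1) / 2) - 1)).filter
            (fun i => Nat.gcd i (4 * s + 2) = 1)).card := by
  subst hn
  have hdisj : (Icc 1 m : Set ℕ).PairwiseDisjoint fun s => lowerEvenFractions (2 * s + 1) := by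
    intro s hs t ht hst
    simp only [coe_Icc, Set.mem_Icc] at hs ht
    refine disjoint_left.2 fun q hqs hqt => hst ?_
    have := ((mem_lowerEvenFractions (by omega)).1 hqs).1.symm.trans
      ((mem_lowerEvenFractions (by omega)).1 hqt).1
    omega
  have hcount : ∀ s ∈ Icc 1 m, 2 * (#(lowerEvenFractions (2 * s + 1)) +
      #{i ∈ Icc 1 (2 * ((s + 1) / 2) - 1) | Nat.gcd i (4 * s + 2) = 1}) = Nat.totient (2 * s + 1) := by
    intro s hs
    obtain ⟨hs1, -⟩ := mem_Icc.1 hs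
    rw [card_lowerEvenFractions, filter_Icc_gcd_four_mul_add_two_eq, card_filter_add_card_filter_not,
      two_mul_card_lowerCoprimeResidues (odd_two_mul_add_one s) (by omega)]
  rw [setOf_lt_half_eq_biUnion_lowerEvenFractions, Set.ncard_coe_finset, card_biUnion hdisj,
    ← sum_congr rfl hcount, ← mul_sum, sum_add_distrib]
  omega

/-- Theorem F(i): for odd n = 2m+1, the number of elements of
    S_n = {β/α : (α,β) ∈ Γ_n} that are < 1/2 equals Φ(n) − ψ(n), where
    Φ(n) = (1/2)·∑_{s=1}^m φ(2s+1) and ψ(n) = ∑_{s=1}^m φ(2⌊(s+1)/2⌋−1, 4s+2). -/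
theorem stmt_14 (m n : ℕ) (hm : 1 ≤ m) (hn : n = 2 * m + 1) :
    ({q : ℚ | (∃ α β : ℕ, 0 < α ∧ 0 < β ∧ Odd α ∧ Even β ∧ β < α ∧ α ≤ n ∧
        q = (β : ℚ) / α) ∧ q < 1 / 2} : Set ℚ).ncard =
      (∑ s ∈ Finset.Icc 1 m, Nat.totient (2 * s + 1)) / 2 -
        ∑ s ∈ Finset.Icc 1 m,
          ((Finset.Icc 1 (2 * ((s + 1) / 2) - 1)).filter
            (fun i => Nat.gcd i (4 * s + 2) = 1)).card :=
  stmt_14_general m n hn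
end

section
/- Let m ≥ 3 be odd and n = 2m+1. Then the greatest element of S_n that is less than 1/2 is (m−1)/(2m−1), and the least element of S_n that is greater than 1/2 is (m+1)/(2m+1). -/
/-- Theorem F(ii)(a): for odd m ≥ 3 and n = 2m+1, the greatest element of S_n below 1/2
    is (m−1)/(2m−1), and the least element of S_n above 1/2 is (m+1)/(2m+1). -/
theorem stmt_15 (m n : ℕ) (hm : 3 ≤ m) (hodd : Odd m) (hn : n = 2 * m + 1) :
    IsGreatest
      ({q : ℚ | (∃ α β : ℕ, 0 < α ∧ 0 < β ∧ Odd α ∧ Even β ∧ β < α ∧ α ≤ n ∧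
          q = (β : ℚ) / α) ∧ q < 1 / 2} : Set ℚ)
      (((m : ℚ) - 1) / (2 * m - 1)) ∧
    IsLeast
      ({q : ℚ | (∃ α β : ℕ, 0 < α ∧ 0 < β ∧ Odd α ∧ Even β ∧ β < α ∧ α ≤ n ∧
          q = (β : ℚ) / α) ∧ 1 / 2 < q} : Set ℚ)
      (((m : ℚ) + 1) / (2 * m + 1)) := by
  subst hn
  obtain ⟨j, hj⟩ := hodd
  have hmQ : (3:ℚ) ≤ (m:ℚ) := by exact_mod_cast hm
  constructor
  · constructor
    · refine ⟨⟨2*m-1, m-1, by omega, by omega, ⟨2*j, by omega⟩, ⟨j, by omega⟩,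
        by omega, by omega, ?_⟩, ?_⟩
      · have h1 : ((m - 1 : ℕ) : ℚ) = (m:ℚ) - 1 := by
          push_cast [Nat.cast_sub (by omega : 1 ≤ m)]; ring
        have h2 : ((2*m - 1 : ℕ) : ℚ) = 2*(m:ℚ) - 1 := by
          push_cast [Nat.cast_sub (by omega : 1 ≤ 2*m)]; ring
        rw [h1, h2]
      · rw [div_lt_div_iff₀ (by linarith) (by norm_num)]; linarith
    · rintro q ⟨⟨α, β, hα, hβ, ⟨a, ha⟩, ⟨b, hb⟩, hβα, hαn, rfl⟩, hq⟩
      have hαQ : (0:ℚ) < (α:ℚ) := by exact_mod_cast hα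
      have h2β : 2 * β < α := by
        have := (div_lt_div_iff₀ hαQ (by norm_num : (0:ℚ) < 2)).mp hq
        have : (β:ℚ) * 2 < (α:ℚ) := by linarith
        exact_mod_cast by exact_mod_cast (by push_cast at this ⊢; linarith : ((2*β:ℕ):ℚ) < (α:ℚ))
      rw [div_le_div_iff₀ hαQ (by linarith)]
      rcases (by omega : α ≤ 2*m - 1 ∨ α = 2*m + 1) with h | h
      · have hαQ' : (α:ℚ) ≤ 2*(m:ℚ) - 1 := by
          have : ((α:ℕ):ℚ) ≤ ((2*m-1:ℕ):ℚ) := by exact_mod_cast h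
          rw [Nat.cast_sub (by omega : 1 ≤ 2*m)] at this; push_cast at this; linarith
        have h2βQ : 2*(β:ℚ) + 1 ≤ (α:ℚ) := by exact_mod_cast h2β
        nlinarith [hβ.le, (by exact_mod_cast hβ : (0:ℚ) < (β:ℚ))]
      · have hβm : β ≤ m - 1 := by omega
        have hβQ : (β:ℚ) ≤ (m:ℚ) - 1 := by
          have : ((β:ℕ):ℚ) ≤ ((m-1:ℕ):ℚ) := by exact_mod_cast hβm
          rw [Nat.cast_sub (by omega : 1 ≤ m)] at this; push_cast at this; linarith
        have hαQ' : (α:ℚ) = 2*(m:ℚ) + 1 := by exact_mod_cast h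
        rw [hαQ']
        nlinarith
  · constructor
    · refine ⟨⟨2*m+1, m+1, by omega, by omega, ⟨m, by omega⟩, ⟨j+1, by omega⟩,
        by omega, by omega, by push_cast; ring⟩, ?_⟩
      rw [div_lt_div_iff₀ (by norm_num) (by linarith)]; linarith
    · rintro q ⟨⟨α, β, hα, hβ, ⟨a, ha⟩, ⟨b, hb⟩, hβα, hαn, rfl⟩, hq⟩
      have hαQ : (0:ℚ) < (α:ℚ) := by exact_mod_cast hα
      have h2β : α < 2 * β := by
        have := (div_lt_div_iff₀ (by norm_num : (0:ℚ) < 2) hαQ).mp hq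
        have h' : (α:ℚ) < (β:ℚ) * 2 := by linarith
        exact_mod_cast by exact_mod_cast (by push_cast at h' ⊢; linarith : ((α:ℕ):ℚ) < ((2*β:ℕ):ℚ))
      have h2βQ : (α:ℚ) + 1 ≤ 2*(β:ℚ) := by exact_mod_cast (by omega : α + 1 ≤ 2*β)
      have hαle : (α:ℚ) ≤ 2*(m:ℚ) + 1 := by exact_mod_cast hαn
      rw [div_le_div_iff₀ (by linarith) hαQ]
      nlinarith
end

section
/- Let m ≥ 2 be even and n = 2m+1. Then the greatest element of S_n that is less than 1/2 is m/(2m+1), and the least element of S_n that is greater than 1/2 is m/(2m−1). -/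
/-- Theorem F(ii)(b): for even m ≥ 2 and n = 2m+1, the greatest element of S_n below 1/2
    is m/(2m+1), and the least element of S_n above 1/2 is m/(2m−1). -/
theorem stmt_16 (m n : ℕ) (hm : 2 ≤ m) (heven : Even m) (hn : n = 2 * m + 1) :
    IsGreatest
      ({q : ℚ | (∃ α β : ℕ, 0 < α ∧ 0 < β ∧ Odd α ∧ Even β ∧ β < α ∧ α ≤ n ∧
          q = (β : ℚ) / α) ∧ q < 1 / 2} : Set ℚ)
      ((m : ℚ) / (2 * m + 1)) ∧
    IsLeast
      ({q : ℚ | (∃ α β : ℕ, 0 < α ∧ 0 < β ∧ Odd α ∧ Even β ∧ β < α ∧ α ≤ n ∧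
          q = (β : ℚ) / α) ∧ 1 / 2 < q} : Set ℚ)
      ((m : ℚ) / (2 * m - 1)) := by
  subst hn
  have hmQ : (2:ℚ) ≤ (m:ℚ) := by exact_mod_cast hm
  constructor
  · constructor
    · refine ⟨⟨2 * m + 1, m, by omega, by omega, ⟨m, by ring⟩, heven, by omega, le_refl _, ?_⟩, ?_⟩
      · push_cast; ring
      · rw [div_lt_div_iff₀ (by linarith) (by norm_num)]
        linarith
    · rintro q ⟨⟨α, β, hα, hβ, hodd, hevβ, hβα, hαn, rfl⟩, hq⟩
      have hαQ : (0:ℚ) < (α:ℚ) := by exact_mod_cast hα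
      have h2 : 2 * β < α := by
        rw [div_lt_div_iff₀ hαQ (by norm_num)] at hq
        have : ((2 * β : ℕ) : ℚ) < (α:ℚ) := by push_cast; linarith
        exact_mod_cast this
      rw [div_le_div_iff₀ hαQ (by linarith)]
      have key : β * (2 * m + 1) ≤ m * α := by nlinarith [hαn, h2]
      calc (β:ℚ) * (2 * (m:ℚ) + 1) = ((β * (2 * m + 1) : ℕ) : ℚ) := by push_cast; ring
        _ ≤ ((m * α : ℕ) : ℚ) := by exact_mod_cast key
        _ = (m:ℚ) * α := by push_cast; ring
  · constructor
    · refine ⟨⟨2 * (m - 1) + 1, m, by omega, by omega, ⟨m - 1, by ring⟩, heven, by omega,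
        by omega, ?_⟩, ?_⟩
      · have : ((2 * (m - 1) + 1 : ℕ) : ℚ) = 2 * (m:ℚ) - 1 := by
          have h1 : (1:ℕ) ≤ m := by omega
          push_cast [Nat.cast_sub h1]; ring
        rw [this]
      · rw [div_lt_div_iff₀ (by norm_num) (by linarith)]
        linarith
    · rintro q ⟨⟨α, β, hα, hβ, hodd, hevβ, hβα, hαn, rfl⟩, hq⟩
      have hαQ : (0:ℚ) < (α:ℚ) := by exact_mod_cast hα
      have h2 : α < 2 * β := by
        rw [div_lt_div_iff₀ (by norm_num) hαQ] at hq
        have : (α:ℚ) < ((2 * β : ℕ) : ℚ) := by push_cast; linarith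
        exact_mod_cast this
      rw [div_le_div_iff₀ (by linarith) hαQ]
      have key : m * α ≤ β * (2 * m - 1) := by
        have ht : 2 * m - 1 + 1 = 2 * m := by omega
        rcases le_or_gt α (2 * m - 1) with hc | hc
        · nlinarith [ht, hc, Nat.mul_le_mul_right (2 * m - 1) (show α + 1 ≤ 2 * β by omega)]
        · -- α odd, 2m-1 < α ≤ 2m+1, m even so α = 2m+1
          obtain ⟨j, hj⟩ := hodd
          obtain ⟨k, hk⟩ := heven
          have hα' : α = 2 * m + 1 := by omega
          obtain ⟨l, hl⟩ := hevβ
          have hβ' : m + 2 ≤ β := by omega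
          subst hα'
          nlinarith [ht, hm, Nat.mul_le_mul_right (2 * m - 1) hβ']
      have hcast : ((2 * m - 1 : ℕ) : ℚ) = 2 * (m:ℚ) - 1 := by
        have h1 : (1:ℕ) ≤ 2 * m := by omega
        push_cast [Nat.cast_sub h1]; ring
      calc (m:ℚ) * α = ((m * α : ℕ) : ℚ) := by push_cast; ring
        _ ≤ ((β * (2 * m - 1) : ℕ) : ℚ) := by exact_mod_cast key
        _ = (β:ℚ) * (2 * (m:ℚ) - 1) := by push_cast [hcast]; ring
end

section
/- Let n = 2m+1 with m ≥ 1 and let 1 ≤ i ≤ ⌊m/2⌋ + 1. Then the rational number 2/(2m−2i+3) belongs to S_n, and exactly i − 1 elements of S_n are strictly smaller than 2/(2m−2i+3); that is, 2/(2m−2i+3) is the i-th smallest element of S_n. Moreover the only pair (α, β) ∈ Γ_n with β/α = 2/(2m−2i+3) is (α, β) = (2m−2i+3, 2). -/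
/-- Lemma 6.1(i): for 1 ≤ i ≤ ⌊m/2⌋+1, the rational 2/(2m−2i+3) is the i-th smallest
    element of S_n (n = 2m+1), and the only pair (α,β) ∈ Γ_n with β/α = 2/(2m−2i+3)
    is (2m−2i+3, 2). -/
theorem stmt_17 (m n i : ℕ) (hm : 1 ≤ m) (hn : n = 2 * m + 1)
    (hi1 : 1 ≤ i) (hi2 : i ≤ m / 2 + 1) :
    ((2 : ℚ) / (2 * m - 2 * i + 3)) ∈
      ({q : ℚ | ∃ α β : ℕ, 0 < α ∧ 0 < β ∧ Odd α ∧ Even β ∧ β < α ∧ α ≤ n ∧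
          q = (β : ℚ) / α} : Set ℚ) ∧
    ({q : ℚ | (∃ α β : ℕ, 0 < α ∧ 0 < β ∧ Odd α ∧ Even β ∧ β < α ∧ α ≤ n ∧
          q = (β : ℚ) / α) ∧ q < (2 : ℚ) / (2 * m - 2 * i + 3)} : Set ℚ).ncard = i - 1 ∧
    (∀ α β : ℕ, 0 < α → 0 < β → Odd α → Even β → β < α → α ≤ n →
      (β : ℚ) / α = (2 : ℚ) / (2 * m - 2 * i + 3) → α = 2 * m - 2 * i + 3 ∧ β = 2) := by
  subst hn
  have hii : 2 * i ≤ 2 * m := by omega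
  set N : ℕ := 2 * m - 2 * i + 3 with hNdef
  have hNm : m + 1 ≤ N := by omega
  have hNcast : (2 * (m:ℚ) - 2 * (i:ℚ) + 3) = (N : ℚ) := by
    rw [hNdef]; push_cast [hii]; ring
  have hNpos : (0:ℚ) < N := by
    exact_mod_cast Nat.pos_of_ne_zero (by omega)
  rw [hNcast]
  refine ⟨⟨N, 2, by omega, by norm_num, ⟨m - i + 1, by omega⟩, even_two, by omega,
      by omega, by norm_num⟩, ?_, ?_⟩
  · -- counting
    have hinj : Set.InjOn (fun t : ℕ => (2:ℚ) / ((2*m+1-2*t : ℕ) : ℚ))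
        ↑(Finset.range (i-1)) := by
      intro s hs t ht hst
      simp only [Finset.coe_range, Set.mem_Iio] at hs ht
      have hsp : (0:ℚ) < ((2*m+1-2*s : ℕ) : ℚ) := by
        exact_mod_cast Nat.pos_of_ne_zero (by omega)
      have htp : (0:ℚ) < ((2*m+1-2*t : ℕ) : ℚ) := by
        exact_mod_cast Nat.pos_of_ne_zero (by omega)
      simp only at hst
      rw [div_eq_div_iff hsp.ne' htp.ne'] at hst
      have : ((2*m+1-2*s : ℕ) : ℚ) = ((2*m+1-2*t : ℕ) : ℚ) := by linarith
      have h2 : (2*m+1-2*s : ℕ) = (2*m+1-2*t : ℕ) := by exact_mod_cast this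
      omega
    have key : {q : ℚ | (∃ α β : ℕ, 0 < α ∧ 0 < β ∧ Odd α ∧ Even β ∧ β < α ∧
          α ≤ 2*m+1 ∧ q = (β : ℚ) / α) ∧ q < (2 : ℚ) / N} =
        ↑((Finset.range (i-1)).image (fun t : ℕ => (2:ℚ) / ((2*m+1-2*t : ℕ) : ℚ))) := by
      ext q
      simp only [Set.mem_setOf_eq, Finset.coe_image, Set.mem_image, Finset.mem_coe,
        Finset.mem_range]
      constructor
      · rintro ⟨⟨α, β, hα, hβ, hαodd, hβev, hlt, hle, rfl⟩, hq⟩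
        have hαQ : (0:ℚ) < (α:ℚ) := by exact_mod_cast hα
        have hβ2 : β = 2 := by
          by_contra hβne
          have hβ4 : 4 ≤ β := by
            obtain ⟨b, hb⟩ := hβev; omega
          have hβ4' : (4:ℚ) ≤ (β:ℚ) := by exact_mod_cast hβ4
          have hle' : (α:ℚ) ≤ 2*(m:ℚ)+1 := by exact_mod_cast hle
          have h1 : (4:ℚ)/(2*(m:ℚ)+1) ≤ (β:ℚ) / α :=
            div_le_div₀ (by positivity) hβ4' hαQ hle'
          have h2 : (2:ℚ)/N ≤ 4/(2*(m:ℚ)+1) := by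
            rw [div_le_div_iff₀ hNpos (by positivity)]
            have h3 : 2*(m:ℚ)+1 ≤ 2 * (N:ℚ) := by exact_mod_cast (by omega : 2*m+1 ≤ 2*N)
            linarith
          linarith
        subst hβ2
        have hNα : (N:ℚ) < (α:ℚ) := by
          rw [div_lt_div_iff₀ hαQ hNpos] at hq
          have h22 : ((2:ℕ):ℚ) = (2:ℚ) := by norm_num
          rw [h22] at hq
          linarith
        have hNαn : N < α := by exact_mod_cast hNα
        obtain ⟨a, ha⟩ := hαodd
        refine ⟨m - a, by omega, ?_⟩
        have hd : 2*m+1-2*(m-a) = α := by omega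
        rw [hd]
        norm_num
      · rintro ⟨t, ht, rfl⟩
        have hd4 : 4 ≤ 2*m+1-2*t := by omega
        refine ⟨⟨2*m+1-2*t, 2, by omega, by norm_num, ⟨m - t, by omega⟩, even_two,
          by omega, by omega, by norm_num⟩, ?_⟩
        have hNα : (N:ℚ) < ((2*m+1-2*t : ℕ):ℚ) := by
          exact_mod_cast (by omega : N < 2*m+1-2*t)
        exact div_lt_div_of_pos_left (by norm_num) hNpos hNα
    rw [key, Set.ncard_coe_finset, Finset.card_image_of_injOn hinj, Finset.card_range]
  · -- uniqueness
    intro α β hα hβ hαodd hβev hlt hle heq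
    have hαQ : (0:ℚ) < (α:ℚ) := by exact_mod_cast hα
    rw [div_eq_div_iff hαQ.ne' hNpos.ne'] at heq
    have hBN : β * N = 2 * α := by exact_mod_cast heq
    have hdvd : N ∣ 2 * α := ⟨β, by rw [← hBN]; ring⟩
    have hcop : Nat.Coprime N 2 := by
      exact Odd.coprime_two_right ⟨m - i + 1, by omega⟩
    have hNα : N ∣ α := (Nat.Coprime.dvd_of_dvd_mul_left hcop hdvd)
    obtain ⟨k, hk⟩ := hNα
    have hβk : β = 2 * k := by
      have h1 : β * N = (2*k) * N := by rw [hBN, hk]; ring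
      exact Nat.eq_of_mul_eq_mul_right (by omega) h1
    have hk1 : k = 1 := by
      rcases Nat.lt_or_ge k 2 with h | h
      · interval_cases k <;> omega
      · exfalso
        have h5 : N * 2 ≤ N * k := Nat.mul_le_mul_left N h
        have h6 : 2*m+2 ≤ N * 2 := by omega
        have h7 : 2*m+2 ≤ N * k := le_trans h6 h5
        omega
    rw [hk1, Nat.mul_one] at hk
    constructor
    · omega
    · omega
end

section
/- Let n = 2m+1 with m ≥ 1 and let 0 ≤ j ≤ ⌊2m/3⌋. Then the rational number (2m−2j)/(2m−2j+1) belongs to S_n, and exactly j elements of S_n are strictly greater than (2m−2j)/(2m−2j+1); that is, (2m−2j)/(2m−2j+1) is the (j+1)-th largest element of S_n. Moreover the only pair (α, β) ∈ Γ_n with β/α = (2m−2j)/(2m−2j+1) is (α, β) = (2m−2j+1, 2m−2j). -/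
private lemma stmt_18_aux_lt (a b : ℕ) (h : a < b) :
    (a : ℚ) / ((a : ℚ) + 1) < (b : ℚ) / ((b : ℚ) + 1) := by
  rw [div_lt_div_iff₀ (by positivity) (by positivity)]
  have h' : (a : ℚ) < b := by exact_mod_cast h
  nlinarith

/-- Lemma 6.1(ii): for 0 ≤ j ≤ ⌊2m/3⌋, the rational (2m−2j)/(2m−2j+1) is the (j+1)-th
    largest element of S_n (n = 2m+1), and the only pair (α,β) ∈ Γ_n with
    β/α = (2m−2j)/(2m−2j+1) is (2m−2j+1, 2m−2j). -/
theorem stmt_18 (m n j : ℕ) (hm : 1 ≤ m) (hn : n = 2 * m + 1) (hj : j ≤ 2 * m / 3) :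
    ((2 * (m : ℚ) - 2 * j) / (2 * m - 2 * j + 1)) ∈
      ({q : ℚ | ∃ α β : ℕ, 0 < α ∧ 0 < β ∧ Odd α ∧ Even β ∧ β < α ∧ α ≤ n ∧
          q = (β : ℚ) / α} : Set ℚ) ∧
    ({q : ℚ | (∃ α β : ℕ, 0 < α ∧ 0 < β ∧ Odd α ∧ Even β ∧ β < α ∧ α ≤ n ∧
          q = (β : ℚ) / α) ∧ (2 * (m : ℚ) - 2 * j) / (2 * m - 2 * j + 1) < q} :
        Set ℚ).ncard = j ∧
    (∀ α β : ℕ, 0 < α → 0 < β → Odd α → Even β → β < α → α ≤ n →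
      (β : ℚ) / α = (2 * (m : ℚ) - 2 * j) / (2 * m - 2 * j + 1) →
      α = 2 * m - 2 * j + 1 ∧ β = 2 * m - 2 * j) := by
  subst hn
  have h3j : 3 * j ≤ 2 * m := by omega
  set c : ℕ := 2 * m - 2 * j with hc
  have hc2m : c + 2 * j = 2 * m := by omega
  have hc1 : 1 ≤ c := by omega
  have hcast : 2 * (m : ℚ) - 2 * j = (c : ℚ) := by
    have h1 : ((c : ℕ) : ℚ) + 2 * j = 2 * m := by exact_mod_cast congrArg (Nat.cast : ℕ → ℚ) hc2m
    linarith
  rw [hcast]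
  have hceven : Even c := ⟨m - j, by omega⟩
  refine ⟨⟨c + 1, c, by omega, hc1, hceven.add_one, hceven, by omega, by omega,
      by push_cast; ring_nf⟩, ?_, ?_⟩
  · -- counting part
    have hkey : {q : ℚ | (∃ α β : ℕ, 0 < α ∧ 0 < β ∧ Odd α ∧ Even β ∧ β < α ∧ α ≤ 2 * m + 1 ∧
          q = (β : ℚ) / α) ∧ (c : ℚ) / (c + 1) < q} =
        ↑((Finset.range j).image
          (fun i => (((2 * m - 2 * i : ℕ) : ℚ)) / (((2 * m - 2 * i : ℕ) : ℚ) + 1))) := by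
      ext q
      simp only [Finset.coe_image, Finset.coe_range, Set.mem_image, Set.mem_Iio, Set.mem_setOf_eq]
      constructor
      · rintro ⟨⟨α, β, hα, hβ, hao, hbe, hba, hαn, rfl⟩, hgt⟩
        obtain ⟨a, ha⟩ := hao
        obtain ⟨b, hb⟩ := hbe
        rw [div_lt_div_iff₀ (by positivity) (by exact_mod_cast hα)] at hgt
        have hcross : c * α < β * (c + 1) := by exact_mod_cast hgt
        have hd1 : α = β + 1 := by
          by_contra hne
          have hge : β + 3 ≤ α := by omega
          have h1 : c * (β + 3) ≤ c * α := Nat.mul_le_mul_left c hge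
          have h4 : 3 * c < β := by nlinarith
          omega
        have hcβ : c < β := by nlinarith
        refine ⟨m - a, by omega, ?_⟩
        have h2a : 2 * m - 2 * (m - a) = β := by omega
        rw [h2a]
        have hαq : (α : ℚ) = (β : ℚ) + 1 := by exact_mod_cast hd1
        rw [← hαq]
      · rintro ⟨i, hij, rfl⟩
        have h2i : 2 * i < 2 * m := by omega
        have hev : Even (2 * m - 2 * i) := ⟨m - i, by omega⟩
        refine ⟨⟨2 * m - 2 * i + 1, 2 * m - 2 * i, by omega, by omega, hev.add_one, hev,
          by omega, by omega, by push_cast; ring_nf⟩, ?_⟩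
        exact stmt_18_aux_lt c (2 * m - 2 * i) (by omega)
    rw [hkey, Set.ncard_coe_finset, Finset.card_image_of_injOn, Finset.card_range]
    intro i hi i' hi' hii
    simp only [Finset.mem_coe, Finset.mem_range] at hi hi'
    dsimp only at hii
    by_contra hne
    rcases Nat.lt_or_ge i i' with h | h
    · exact absurd hii.symm
        (ne_of_lt (stmt_18_aux_lt (2 * m - 2 * i') (2 * m - 2 * i) (by omega)))
    · have h' : i' < i := by omega
      exact absurd hii
        (ne_of_lt (stmt_18_aux_lt (2 * m - 2 * i) (2 * m - 2 * i') (by omega)))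
  · -- uniqueness
    intro α β hα hβ hao hbe hba hαn heq
    have hαq : ((α : ℚ)) ≠ 0 := Nat.cast_ne_zero.mpr (by omega)
    rw [div_eq_div_iff hαq (by positivity)] at heq
    have hcross : β * (c + 1) = c * α := by exact_mod_cast heq
    have hcop : Nat.Coprime (c + 1) c := by simp
    have hdvd : (c + 1) ∣ α := by
      have h1 : (c + 1) ∣ α * c := ⟨β, by rw [mul_comm α c, ← hcross]; ring⟩
      exact hcop.dvd_of_dvd_mul_right h1
    obtain ⟨k, hk⟩ := hdvd
    have hβk : β = c * k := by
      have h2 : β * (c + 1) = (c * k) * (c + 1) := by rw [hcross, hk]; ring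
      exact Nat.eq_of_mul_eq_mul_right (by omega) h2
    have hkodd : Odd k := by
      rcases Nat.even_or_odd k with hke | hko
      · exact absurd (hk ▸ hke.mul_left (c + 1)) (Nat.not_even_iff_odd.mpr hao)
      · exact hko
    have hk1 : k = 1 := by
      obtain ⟨t, ht⟩ := hkodd
      rcases Nat.eq_zero_or_pos t with rfl | ht1
      · omega
      · exfalso
        have h3c : 2 * m ≤ 3 * c := by omega
        have h5 : 3 * (c + 1) ≤ α := by
          rw [hk]
          calc 3 * (c + 1) = (c + 1) * 3 := by ring
          _ ≤ (c + 1) * k := Nat.mul_le_mul_left _ (by omega)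
        omega
    subst hk1
    simp only [mul_one] at hk hβk
    omega
end
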